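/- Let n ≥ 8 and let C ⊆ 𝔽₂ⁿ be a finite set of vectors each of Hamming weight exactly 8, such that any two distinct elements of C have Hamming distance at least 8. Let V ⊆ ℝⁿ be the union of: (i) all vectors with exactly two nonzero coordinates, each equal to 2 or −2; and (ii) all vectors w such that, for some c ∈ C, w_i ∈ {1, −1} for every i in the support of c, w_i = 0 for every i outside the support of c, and the number of coordinates with w_i = −1 is odd. Then every v ∈ V has squared Euclidean norm 8, any two distinct v, w ∈ V satisfy ⟨v, w⟩ ≤ 4, and |V| = 4·(n choose 2) + 128·|C|. -/

import Mathlib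

open scoped RealInnerProductSpace

/-- The odd-signs kissing configuration in `ℝⁿ` associated to a constant-weight-8
binary code `C ⊆ 𝔽₂ⁿ`: the union of (i) all vectors with exactly two nonzero
coordinates, each equal to `2` or `-2`, and (ii) all vectors with entries `±1` on
the support of some codeword `c ∈ C` and `0` elsewhere, having an odd number of
entries equal to `-1`. -/
def oddKissingConfig (n : ℕ) (C : Finset (Fin n → ZMod 2)) :
    Set (EuclideanSpace ℝ (Fin n)) :=
  {w | (∃ i j : Fin n, i ≠ j ∧ (w i = 2 ∨ w i = -2) ∧ (w j = 2 ∨ w j = -2) ∧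
          ∀ k : Fin n, k ≠ i → k ≠ j → w k = 0) ∨
       (∃ c ∈ C, (∀ i : Fin n, c i ≠ 0 → (w i = 1 ∨ w i = -1)) ∧
          (∀ i : Fin n, c i = 0 → w i = 0) ∧
          Odd {i : Fin n | w i = -1}.ncard)}

/-!
Every vector of the configuration has the form `signVec a s T`: entries `±a` on a support `s`,
negative exactly on `T ⊆ s`; the two-spike vectors have `a = 2`, `#s = 2`, the others `a = 1`,
`s` the support of a codeword and `#T` odd. For all such vectors
`⟪signVec a s T, signVec b s' T'⟫ ≤ a * b * #(s ∩ s')`, which settles all pairs with different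
supports, since two weight-8 words at distance `≥ 8` share at most 4 coordinates. On a common
support the inner product is `a * b * (#s - 2 * #(T ∆ T'))`, where `T ∆ T'` is nonempty, and of even
size when `#T` and `#T'` are odd. For the count, `(s, T) ↦ signVec a s T` is injective and a
nonempty `k`-set has `2 ^ (k - 1)` subsets of odd size.
-/

open scoped symmDiff
open Finset

namespace Finset

variable {α : Type*}

theorem card_symmDiff_add_two_mul_card_inter [DecidableEq α] (s t : Finset α) :
    #(s ∆ t) + 2 * #(s ∩ t) = #s + #t := by
  rw [symmDiff_eq_sup_sdiff_inf, sup_eq_union, inf_eq_inter,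
    card_sdiff_of_subset inter_subset_union]
  have := card_union_add_card_inter s t
  have := card_le_card (inter_subset_union (s := s) (t := t))
  omega

theorem even_card_symmDiff_of_odd [DecidableEq α] {s t : Finset α} (hs : Odd #s)
    (ht : Odd #t) : Even #(s ∆ t) := by
  have h := card_symmDiff_add_two_mul_card_inter s t
  obtain ⟨a, ha⟩ := hs
  obtain ⟨b, hb⟩ := ht
  exact ⟨a + b + 1 - #(s ∩ t), by omega⟩

theorem card_powerset_filter_odd {s : Finset α} (hs : s.Nonempty) :
    #(s.powerset.filter fun t => Odd #t) = 2 ^ (#s - 1) := by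
  have hsign : ∑ t ∈ s.powerset, (-1 : ℤ) ^ #t =
      #(s.powerset.filter fun t => ¬Odd #t) - #(s.powerset.filter fun t => Odd #t) := by
    simp only [neg_one_pow_eq_ite, ← Nat.not_odd_iff_even, sum_ite, not_not, sum_const,
      nsmul_eq_mul]
    ring
  have htotal := card_filter_add_card_filter_not (s := s.powerset) (fun t => Odd #t)
  rw [sum_powerset_neg_one_pow_card_of_nonempty hs] at hsign
  rw [card_powerset] at htotal
  have h2 : 2 ^ #s = 2 * 2 ^ (#s - 1) := by
    rw [← pow_succ', Nat.sub_add_cancel hs.card_pos]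
  omega

end Finset

section SignVec

variable {ι : Type*} [DecidableEq ι]

def signVec (a : ℝ) (s T : Finset ι) : EuclideanSpace ℝ ι :=
  WithLp.toLp 2 fun k => if k ∈ s then (if k ∈ T then -a else a) else 0

variable {a b : ℝ} {s s' T T' : Finset ι}

@[simp]
theorem signVec_apply (k : ι) :
    signVec a s T k = if k ∈ s then (if k ∈ T then -a else a) else 0 := rfl

theorem signVec_apply_ne_zero_iff (ha : a ≠ 0) (k : ι) : signVec a s T k ≠ 0 ↔ k ∈ s := by
  by_cases hk : k ∈ s <;> by_cases hT : k ∈ T <;> simp [hk, hT, ha]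

theorem signVec_apply_neg_iff (ha : 0 < a) (hT : T ⊆ s) (k : ι) :
    signVec a s T k < 0 ↔ k ∈ T := by
  by_cases hk : k ∈ T
  · simp [hk, hT hk, ha]
  · by_cases hks : k ∈ s <;> simp [hk, hks, ha.le]

theorem abs_signVec_apply_of_mem {k : ι} (hk : k ∈ s) : |signVec a s T k| = |a| := by
  by_cases hT : k ∈ T <;> simp [hk, hT]

theorem eq_of_signVec_eq (ha : 0 < a) (hb : 0 < b) (hT : T ⊆ s) (hT' : T' ⊆ s')
    (h : signVec a s T = signVec b s' T') : s = s' ∧ T = T' := by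
  constructor <;> ext k
  · rw [← signVec_apply_ne_zero_iff ha.ne' (T := T),
      ← signVec_apply_ne_zero_iff hb.ne' (T := T'), h]
  · rw [← signVec_apply_neg_iff ha hT, ← signVec_apply_neg_iff hb hT', h]

variable [Fintype ι]

theorem exists_signVec_eq_iff (ha : a ≠ 0) {v : EuclideanSpace ℝ ι} (P : Finset ι → Prop) :
    (∃ T ⊆ s, P T ∧ signVec a s T = v) ↔
      (∀ k ∈ s, v k = a ∨ v k = -a) ∧ (∀ k ∉ s, v k = 0) ∧ P {k | v k = -a} := by
  constructor
  · rintro ⟨T, hT, hP, rfl⟩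
    refine ⟨fun k hk => ?_, fun k hk => by simp [hk], ?_⟩
    · by_cases hkT : k ∈ T <;> simp [hk, hkT]
    · convert hP
      ext k
      simp only [mem_filter, mem_univ, true_and]
      by_cases hkT : k ∈ T
      · simp [hkT, hT hkT]
      · by_cases hk : k ∈ s <;> simp [hkT, hk, ha, self_eq_neg]
  · rintro ⟨hs, hsc, hP⟩
    refine ⟨_, fun k hk => ?_, hP, ?_⟩
    · by_contra hks
      simp only [mem_filter, mem_univ, true_and, hsc k hks, zero_eq_neg] at hk
      exact ha hk
    · ext k
      by_cases hk : k ∈ s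
      · rcases hs k hk with h | h <;> simp [hk, h, ha, self_eq_neg]
      · simp [hk, hsc k hk]

theorem inner_signVec :
    ⟪signVec a s T, signVec b s' T'⟫ =
      ∑ k ∈ s ∩ s', if (k ∈ T ↔ k ∈ T') then a * b else -(a * b) := by
  rw [PiLp.inner_apply, ← sum_subset (subset_univ (s ∩ s'))]
  · refine sum_congr rfl fun k hk => ?_
    obtain ⟨hks, hks'⟩ := mem_inter.1 hk
    by_cases hT : k ∈ T <;> by_cases hT' : k ∈ T' <;> simp [hks, hks', hT, hT', mul_comm]
  · intro k _ hk
    rw [mem_inter, not_and_or] at hk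
    rcases hk with hk | hk <;> simp [hk]

theorem inner_signVec_le (hab : 0 ≤ a * b) :
    ⟪signVec a s T, signVec b s' T'⟫ ≤ a * b * #(s ∩ s') := by
  rw [inner_signVec]
  refine (sum_le_card_nsmul _ _ (a * b) fun k _ => ?_).trans_eq (by rw [nsmul_eq_mul]; ring)
  split_ifs <;> linarith

theorem inner_signVec_of_subset (hT : T ⊆ s) (hT' : T' ⊆ s) :
    ⟪signVec a s T, signVec b s T'⟫ = a * b * (#s - 2 * #(T ∆ T')) := by
  have hterm : ∀ k ∈ s, (if (k ∈ T ↔ k ∈ T') then a * b else -(a * b)) =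
      a * b - if k ∈ T ∆ T' then 2 * (a * b) else 0 := by
    intro k _
    by_cases hk : k ∈ T <;> by_cases hk' : k ∈ T' <;> simp [mem_symmDiff, hk, hk'] <;> ring
  have hΔ : T ∆ T' ⊆ s := symmDiff_le (le_sup_of_le_right hT) (le_sup_of_le_right hT')
  rw [inner_signVec, inter_self, sum_congr rfl hterm, sum_sub_distrib, ← sum_filter,
    filter_mem_eq_inter, inter_eq_right.2 hΔ]
  simp only [sum_const, nsmul_eq_mul]
  ring

theorem norm_signVec_sq (hT : T ⊆ s) : ‖signVec a s T‖ ^ 2 = a ^ 2 * #s := by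
  rw [← real_inner_self_eq_norm_sq, inner_signVec_of_subset hT hT, symmDiff_self,
    bot_eq_empty, card_empty]
  ring

end SignVec

section HammingSupport

variable {ι β : Type*} [Fintype ι] [Zero β] [DecidableEq β]

def hammingSupport (c : ι → β) : Finset ι := {i | c i ≠ 0}

@[simp]
theorem mem_hammingSupport {c : ι → β} {i : ι} : i ∈ hammingSupport c ↔ c i ≠ 0 := by
  simp [hammingSupport]

theorem card_hammingSupport (c : ι → β) : #(hammingSupport c) = hammingNorm c := rfl

variable [DecidableEq ι]

theorem hammingDist_eq_card_symmDiff_hammingSupport (c c' : ι → ZMod 2) :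
    hammingDist c c' = #(hammingSupport c ∆ hammingSupport c') := by
  have h01 : ∀ x : ZMod 2, x ≠ 0 ↔ x = 1 := by decide
  unfold hammingDist
  congr 1
  ext i
  simp only [mem_filter, mem_univ, true_and, mem_symmDiff, mem_hammingSupport, h01]
  generalize c i = x, c' i = y
  revert x y
  decide

theorem hammingSupport_injective :
    Function.Injective (hammingSupport : (ι → ZMod 2) → Finset ι) := fun c c' h => by
  rw [← hammingDist_eq_zero, hammingDist_eq_card_symmDiff_hammingSupport, h, symmDiff_self,
    bot_eq_empty, card_empty]

theorem two_mul_card_inter_hammingSupport_add_hammingDist (c c' : ι → ZMod 2) :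
    2 * #(hammingSupport c ∩ hammingSupport c') + hammingDist c c' =
      hammingNorm c + hammingNorm c' := by
  rw [hammingDist_eq_card_symmDiff_hammingSupport, ← card_hammingSupport, ← card_hammingSupport,
    ← card_symmDiff_add_two_mul_card_inter, add_comm]

end HammingSupport

section Configuration

variable {ι : Type*} [Fintype ι] [DecidableEq ι]

variable (ι) in
noncomputable def twoSpikeVectors : Finset (EuclideanSpace ℝ ι) :=
  ((univ.powersetCard 2).sigma powerset).image fun p => signVec 2 p.1 p.2

noncomputable def codewordVectors (C : Finset (ι → ZMod 2)) : Finset (EuclideanSpace ℝ ι) :=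
  (C.sigma fun c => (hammingSupport c).powerset.filter fun T => Odd #T).image
    fun p => signVec 1 (hammingSupport p.1) p.2

theorem mem_twoSpikeVectors {v : EuclideanSpace ℝ ι} :
    v ∈ twoSpikeVectors ι ↔ ∃ s T, #s = 2 ∧ T ⊆ s ∧ signVec 2 s T = v := by
  simp [twoSpikeVectors, and_assoc]

theorem mem_codewordVectors {C : Finset (ι → ZMod 2)} {v : EuclideanSpace ℝ ι} :
    v ∈ codewordVectors C ↔
      ∃ c ∈ C, ∃ T ⊆ hammingSupport c, Odd #T ∧ signVec 1 (hammingSupport c) T = v := by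
  simp [codewordVectors, and_assoc]

theorem card_twoSpikeVectors : #(twoSpikeVectors ι) = 4 * (Fintype.card ι).choose 2 := by
  rw [twoSpikeVectors, card_image_of_injOn, card_sigma]
  · rw [sum_congr rfl fun s hs => by rw [card_powerset, (mem_powersetCard.1 hs).2], sum_const,
      card_powersetCard, card_univ, smul_eq_mul]
    ring
  · rintro ⟨s, T⟩ hsT ⟨s', T'⟩ hsT' h
    simp only [coe_sigma, Set.mem_sigma_iff, mem_coe, mem_powerset] at hsT hsT'
    obtain ⟨rfl, rfl⟩ := eq_of_signVec_eq two_pos two_pos hsT.2 hsT'.2 h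
    rfl

theorem card_codewordVectors {C : Finset (ι → ZMod 2)} {w : ℕ} (hw : 0 < w)
    (hweight : ∀ c ∈ C, hammingNorm c = w) :
    #(codewordVectors C) = 2 ^ (w - 1) * #C := by
  rw [codewordVectors, card_image_of_injOn, card_sigma]
  · have hodd : ∀ c ∈ C, #((hammingSupport c).powerset.filter fun T => Odd #T) = 2 ^ (w - 1) := by
      intro c hc
      have hne : (hammingSupport c).Nonempty := by
        rw [← card_pos, card_hammingSupport, hweight c hc]
        exact hw
      rw [card_powerset_filter_odd hne, card_hammingSupport, hweight c hc]
    rw [sum_congr rfl hodd, sum_const, smul_eq_mul, mul_comm]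
  · rintro ⟨c, T⟩ hcT ⟨c', T'⟩ hcT' h
    simp only [coe_sigma, Set.mem_sigma_iff, mem_coe, mem_filter, mem_powerset] at hcT hcT'
    obtain ⟨hcc', rfl⟩ := eq_of_signVec_eq one_pos one_pos hcT.2.1 hcT'.2.1 h
    obtain rfl := hammingSupport_injective hcc'
    rfl

theorem disjoint_twoSpikeVectors_codewordVectors (C : Finset (ι → ZMod 2)) :
    Disjoint (twoSpikeVectors ι) (codewordVectors C) := by
  rw [disjoint_left]
  rintro v hv hv'
  obtain ⟨s, T, hs, hT, rfl⟩ := mem_twoSpikeVectors.1 hv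
  obtain ⟨c, -, T', hT', -, h⟩ := mem_codewordVectors.1 hv'
  obtain ⟨k, hk⟩ : s.Nonempty := by rw [← card_pos, hs]; norm_num
  obtain ⟨hss, -⟩ := eq_of_signVec_eq one_pos two_pos hT' hT h
  have := abs_signVec_apply_of_mem (a := 1) (T := T') (hss ▸ hk)
  rw [h, abs_signVec_apply_of_mem hk] at this
  norm_num at this

theorem norm_sq_of_mem_twoSpikeVectors {v : EuclideanSpace ℝ ι} (hv : v ∈ twoSpikeVectors ι) :
    ‖v‖ ^ 2 = 8 := by
  obtain ⟨s, T, hs, hT, rfl⟩ := mem_twoSpikeVectors.1 hv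
  rw [norm_signVec_sq hT, hs]
  norm_num

theorem norm_sq_of_mem_codewordVectors {C : Finset (ι → ZMod 2)} {w : ℕ}
    (hweight : ∀ c ∈ C, hammingNorm c = w) {v : EuclideanSpace ℝ ι} (hv : v ∈ codewordVectors C) :
    ‖v‖ ^ 2 = w := by
  obtain ⟨c, hc, T, hT, -, rfl⟩ := mem_codewordVectors.1 hv
  rw [norm_signVec_sq hT, card_hammingSupport, hweight c hc]
  norm_num

theorem inner_le_of_mem_twoSpikeVectors {v w : EuclideanSpace ℝ ι}
    (hv : v ∈ twoSpikeVectors ι) (hw : w ∈ twoSpikeVectors ι) (hne : v ≠ w) : ⟪v, w⟫ ≤ 4 := by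
  obtain ⟨s, T, hs, hT, rfl⟩ := mem_twoSpikeVectors.1 hv
  obtain ⟨s', T', hs', hT', rfl⟩ := mem_twoSpikeVectors.1 hw
  by_cases hss' : s = s'
  · subst hss'
    have hTT' : T ≠ T' := by rintro rfl; exact hne rfl
    have hΔ := (symmDiff_nonempty.2 hTT').card_pos
    rw [inner_signVec_of_subset hT hT', hs]
    have : (1 : ℝ) ≤ #(T ∆ T') := by exact_mod_cast hΔ
    push_cast
    linarith
  · have hΔ := (symmDiff_nonempty.2 hss').card_pos
    have hcard := card_symmDiff_add_two_mul_card_inter s s'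
    have : #(s ∩ s') ≤ 1 := by omega
    calc ⟪signVec 2 s T, signVec 2 s' T'⟫ ≤ 2 * 2 * #(s ∩ s') := inner_signVec_le (by norm_num)
      _ ≤ 2 * 2 * 1 := by gcongr; exact_mod_cast this
      _ = 4 := by norm_num

theorem inner_le_of_mem_twoSpikeVectors_of_mem_codewordVectors {C : Finset (ι → ZMod 2)}
    {v w : EuclideanSpace ℝ ι} (hv : v ∈ twoSpikeVectors ι) (hw : w ∈ codewordVectors C) :
    ⟪v, w⟫ ≤ 4 := by
  obtain ⟨s, T, hs, -, rfl⟩ := mem_twoSpikeVectors.1 hv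
  obtain ⟨c, -, T', -, -, rfl⟩ := mem_codewordVectors.1 hw
  have : #(s ∩ hammingSupport c) ≤ 2 := (card_le_card inter_subset_left).trans hs.le
  calc ⟪signVec 2 s T, signVec 1 (hammingSupport c) T'⟫
      ≤ 2 * 1 * #(s ∩ hammingSupport c) := inner_signVec_le (by norm_num)
    _ ≤ 2 * 1 * 2 := by gcongr; exact_mod_cast this
    _ = 4 := by norm_num

theorem inner_le_of_mem_codewordVectors {C : Finset (ι → ZMod 2)}
    (hweight : ∀ c ∈ C, hammingNorm c = 8)
    (hdist : ∀ c ∈ C, ∀ c' ∈ C, c ≠ c' → 8 ≤ hammingDist c c') {v w : EuclideanSpace ℝ ι}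
    (hv : v ∈ codewordVectors C) (hw : w ∈ codewordVectors C) (hne : v ≠ w) : ⟪v, w⟫ ≤ 4 := by
  obtain ⟨c, hc, T, hT, hTodd, rfl⟩ := mem_codewordVectors.1 hv
  obtain ⟨c', hc', T', hT', hTodd', rfl⟩ := mem_codewordVectors.1 hw
  by_cases hcc' : c = c'
  · subst hcc'
    have hTT' : T ≠ T' := by rintro rfl; exact hne rfl
    have hΔ := (symmDiff_nonempty.2 hTT').card_pos
    obtain ⟨m, hm⟩ := even_card_symmDiff_of_odd hTodd hTodd'
    rw [inner_signVec_of_subset hT hT', card_hammingSupport, hweight c hc]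
    have : (2 : ℝ) ≤ #(T ∆ T') := by exact_mod_cast (show 2 ≤ #(T ∆ T') by omega)
    push_cast
    linarith
  · have hcard := two_mul_card_inter_hammingSupport_add_hammingDist c c'
    rw [hweight c hc, hweight c' hc'] at hcard
    have : #(hammingSupport c ∩ hammingSupport c') ≤ 4 := by
      have := hdist c hc c' hc' hcc'
      omega
    calc ⟪signVec 1 (hammingSupport c) T, signVec 1 (hammingSupport c') T'⟫
        ≤ 1 * 1 * #(hammingSupport c ∩ hammingSupport c') := inner_signVec_le (by norm_num)
      _ ≤ 1 * 1 * 4 := by gcongr; exact_mod_cast this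
      _ = 4 := by norm_num

end Configuration

theorem oddKissingConfig_eq_twoSpikeVectors_union_codewordVectors (n : ℕ)
    (C : Finset (Fin n → ZMod 2)) :
    oddKissingConfig n C = ↑(twoSpikeVectors (Fin n) ∪ codewordVectors C) := by
  ext v
  simp only [oddKissingConfig, Set.mem_ofPred_eq, coe_union, Set.mem_union, mem_coe,
    mem_twoSpikeVectors, mem_codewordVectors]
  refine or_congr ⟨?_, ?_⟩ (exists_congr fun c => and_congr_right fun _ => ?_)
  · rintro ⟨i, j, hij, hi, hj, hk⟩
    obtain ⟨T, hT, -, h⟩ :=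
      (exists_signVec_eq_iff two_ne_zero (s := {i, j}) (v := v) fun _ => True).2
      ⟨by simp [hi, hj], by simpa using hk, trivial⟩
    exact ⟨{i, j}, T, card_pair hij, hT, h⟩
  · rintro ⟨s, T, hs, hT, h⟩
    obtain ⟨i, j, hij, rfl⟩ := card_eq_two.1 hs
    obtain ⟨hij', hk, -⟩ :=
      (exists_signVec_eq_iff two_ne_zero fun _ => True).1 ⟨T, hT, trivial, h⟩
    exact ⟨i, j, hij, hij' i (by simp), hij' j (by simp),
      fun k hki hkj => hk k (by simp [hki, hkj])⟩
  · rw [exists_signVec_eq_iff one_ne_zero fun T => Odd #T]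
    simp [← Set.ncard_coe_finset]

theorem oddKissingConfig_norm_inner_card (n : ℕ)
    (C : Finset (Fin n → ZMod 2))
    (hweight : ∀ c ∈ C, hammingNorm c = 8)
    (hdist : ∀ c ∈ C, ∀ c' ∈ C, c ≠ c' → 8 ≤ hammingDist c c') :
    (∀ v ∈ oddKissingConfig n C, ‖v‖ ^ 2 = 8) ∧
    (∀ v ∈ oddKissingConfig n C, ∀ w ∈ oddKissingConfig n C, v ≠ w → ⟪v, w⟫ ≤ 4) ∧
    (oddKissingConfig n C).ncard = 4 * n.choose 2 + 128 * C.card := by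
  rw [oddKissingConfig_eq_twoSpikeVectors_union_codewordVectors, Set.ncard_coe_finset]
  simp only [mem_coe, mem_union]
  refine ⟨?_, ?_, ?_⟩
  · rintro v (hv | hv)
    · exact norm_sq_of_mem_twoSpikeVectors hv
    · exact_mod_cast norm_sq_of_mem_codewordVectors hweight hv
  · rintro v (hv | hv) w (hw | hw) hne
    · exact inner_le_of_mem_twoSpikeVectors hv hw hne
    · exact inner_le_of_mem_twoSpikeVectors_of_mem_codewordVectors hv hw
    · rw [real_inner_comm]
      exact inner_le_of_mem_twoSpikeVectors_of_mem_codewordVectors hw hv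
    · exact inner_le_of_mem_codewordVectors hweight hdist hv hw hne
  · rw [card_union_of_disjoint (disjoint_twoSpikeVectors_codewordVectors C),
      card_twoSpikeVectors, card_codewordVectors (by norm_num) hweight, Fintype.card_fin]
    norm_num
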